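/- arXiv:1611.06218 — 2 statements merged into one kernel-verified Lean document; each statement's English description precedes it below -/
import Mathlib

section
/- Let Φ be a Young function (no Δ2-condition assumed). If a sequence (ξ_n) in L_{Φ*} converges to 0 in probability and converges to ξ ∈ L_{Φ*} for the weak topology σ(L_{Φ*},L_Φ) induced by the pairing ⟨η,ξ⟩ = E[ηξ], then ξ = 0. -/
open MeasureTheory Filter Topology Set
open scoped ENNReal

noncomputable section

namespace OrliczPaper

variable {Ω : Type*} [MeasurableSpace Ω]

/-- A (finite, coercive) Young function: an even convex function with `Φ 0 = 0`
and `Φ x / x → ∞` as `x → ∞`. -/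
structure IsYoung (Φ : ℝ → ℝ) : Prop where
  even : ∀ x, Φ (-x) = Φ x
  convexOn : ConvexOn ℝ Set.univ Φ
  map_zero : Φ 0 = 0
  coercive : Tendsto (fun x => Φ x / x) atTop atTop

/-- The Δ₂-condition: `limsup_{x→∞} Φ(2x)/Φ(x) < ∞`, i.e. `Φ(2x) ≤ C Φ(x)`
for all large `x`. -/
def Delta2 (Φ : ℝ → ℝ) : Prop :=
  ∃ C x₀ : ℝ, ∀ x ≥ x₀, Φ (2 * x) ≤ C * Φ x

/-- The conjugate Young function `Φ*(y) = sup_x (x y − Φ x)`. -/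
def conj (Φ : ℝ → ℝ) (y : ℝ) : ℝ := ⨆ x : ℝ, x * y - Φ x

variable (P : Measure Ω)

/-- Membership in the Orlicz space `L_Φ`: a measurable function with
`E[Φ(l ξ)] < ∞` for some `l > 0`. -/
def MemOrlicz (Φ : ℝ → ℝ) (f : Ω → ℝ) : Prop :=
  Measurable f ∧ ∃ l : ℝ, 0 < l ∧ ∫⁻ ω, ENNReal.ofReal (Φ (l * f ω)) ∂P < ⊤

/-- The Orlicz space `L_Φ`, as a set of (everywhere defined) measurable functions. -/
def Orlicz (Φ : ℝ → ℝ) : Set (Ω → ℝ) := {f | MemOrlicz P Φ f}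

/-- The Luxemburg norm `‖f‖_Φ = inf {l > 0 : E[Φ(f/l)] ≤ 1}`. -/
def luxNorm (Φ : ℝ → ℝ) (f : Ω → ℝ) : ℝ :=
  sInf {l : ℝ | 0 < l ∧ ∫⁻ ω, ENNReal.ofReal (Φ (f ω / l)) ∂P ≤ 1}

/-- The Orlicz (dual) norm `‖f‖_{(Φ*)} = sup {E[g f] : E[Φ(g)] ≤ 1}`
(the Young function `Φ` here is the one of the *predual*). -/
def orliczNorm (Φ : ℝ → ℝ) (f : Ω → ℝ) : ℝ :=
  sSup {r : ℝ | ∃ g : Ω → ℝ, Measurable g ∧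
    (∫⁻ ω, ENNReal.ofReal (Φ (g ω)) ∂P) ≤ 1 ∧ r = ∫ ω, g ω * f ω ∂P}

/-- The bilinear pairing `⟨f, g⟩ = E[f g]`. -/
def pairing (f g : Ω → ℝ) : ℝ := ∫ ω, f ω * g ω ∂P

/-- The weak topology `σ(E, F)` on `E` induced by the pairing with `F`. -/
def weakT (E F : Set (Ω → ℝ)) : TopologicalSpace E :=
  TopologicalSpace.induced
    (fun ξ : E => fun η : F => pairing P (ξ : Ω → ℝ) (η : Ω → ℝ)) inferInstance

/-- The absolutely convex (convex and balanced) `σ(F,E)`-compact subsets of `F`. -/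
def dualSets (E F : Set (Ω → ℝ)) : Set (Set F) :=
  {A | Convex ℝ (Subtype.val '' A) ∧ Balanced ℝ (Subtype.val '' A) ∧
    @IsCompact _ (weakT P F E) A}

/-- The Mackey topology `τ(E, F)`: the topology on `E` of uniform convergence on
absolutely convex `σ(F,E)`-compact subsets of `F`. -/
def mackeyT (E F : Set (Ω → ℝ)) : TopologicalSpace E :=
  TopologicalSpace.induced
    (fun ξ : E => UniformOnFun.ofFun (dualSets P E F)
      (fun η : F => pairing P (ξ : Ω → ℝ) (η : Ω → ℝ)))
    inferInstance

/-- A distance generating the topology of convergence in `P`-probability. -/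
def probDist (f g : Ω → ℝ) : ℝ := ∫ ω, min |f ω - g ω| 1 ∂P

/-- The topology of convergence in probability, restricted to `E ⊆ L₀`. -/
def probT (E : Set (Ω → ℝ)) : TopologicalSpace E :=
  TopologicalSpace.generateFrom
    {U | ∃ f : E, ∃ ε : ℝ, 0 < ε ∧ U = {g : E | probDist P (f : Ω → ℝ) (g : Ω → ℝ) < ε}}

/-- `L_∞`: essentially bounded measurable functions. -/
def Linf : Set (Ω → ℝ) := {f | Measurable f ∧ ∃ C : ℝ, ∀ᵐ ω ∂P, |f ω| ≤ C}

/-- `L_1`: integrable measurable functions. -/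
def L1 : Set (Ω → ℝ) := {f | Measurable f ∧ Integrable f P}

/-- The essential supremum norm. -/
def linfNorm (f : Ω → ℝ) : ℝ := sInf {C : ℝ | 0 ≤ C ∧ ∀ᵐ ω ∂P, |f ω| ≤ C}

/-- Uniform integrability of a set of functions:
`sup_{f ∈ A} E[|f| 1_{|f| > N}] → 0`. -/
def UnifInt (A : Set (Ω → ℝ)) : Prop :=
  Tendsto (fun N : ℕ => ⨆ f ∈ A, ∫⁻ ω in {ω | (N : ℝ) < |f ω|}, ENNReal.ofReal |f ω| ∂P)
    atTop (𝓝 0)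

/-- Uniform integrability of a sequence of functions. -/
def UnifIntSeq (g : ℕ → Ω → ℝ) : Prop :=
  Tendsto (fun N : ℕ => ⨆ n, ∫⁻ ω in {ω | (N : ℝ) < |g n ω|}, ENNReal.ofReal |g n ω| ∂P)
    atTop (𝓝 0)

/-- The Cesàro means of a sequence of functions: `cesaro ξ N` is the average of
`ξ 0, …, ξ N`. -/
def cesaro (ξ : ℕ → Ω → ℝ) (N : ℕ) : Ω → ℝ :=
  fun ω => (∑ i ∈ Finset.range (N + 1), ξ i ω) / (N + 1)

/-- `sup_n |ξ n| ∈ L_Φ` (order boundedness of the sequence `ξ` in `L_Φ`). -/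
def supMem (Φ : ℝ → ℝ) (ξ : ℕ → Ω → ℝ) : Prop :=
  (∀ᵐ ω ∂P, BddAbove (Set.range fun n => |ξ n ω|)) ∧
    MemOrlicz P Φ (fun ω => ⨆ n, |ξ n ω|)

/-- `ξb` is a sequence of forward convex combinations of `ξ`:
`ξb n ∈ conv (ξ k ; k ≥ n)`. -/
def FwdConvComb (ξ ξb : ℕ → Ω → ℝ) : Prop :=
  ∀ n, ξb n ∈ convexHull ℝ {g : Ω → ℝ | ∃ k ≥ n, g = ξ k}

/-- The left derivative of a convex function. -/
def leftDeriv (Φ : ℝ → ℝ) (y : ℝ) : ℝ :=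
  ⨆ h : {h : ℝ // 0 < h}, (Φ y - Φ (y - (h : ℝ))) / (h : ℝ)

/-- `p_Φ(x) = sup_{y > x} y Φ'(y) / Φ(y)`. -/
def pPhiAt (Φ : ℝ → ℝ) (x : ℝ) : ℝ≥0∞ :=
  ⨆ y : {y : ℝ // x < y}, ENNReal.ofReal ((y : ℝ) * leftDeriv Φ (y : ℝ) / Φ (y : ℝ))

/-- `p_Φ = inf_{x ≥ 0} p_Φ(x)`. -/
def pPhi (Φ : ℝ → ℝ) : ℝ≥0∞ := ⨅ x : {x : ℝ // 0 ≤ x}, pPhiAt Φ x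

/-- `q_Φ = p_Φ / (p_Φ − 1)` (with `1/0 = ∞`). -/
def qPhi (Φ : ℝ → ℝ) : ℝ≥0∞ := pPhi Φ / (pPhi Φ - 1)

end OrliczPaper

namespace OrliczPaper

lemma aux_oneSided {Ω : Type*} [MeasurableSpace Ω] (P : Measure Ω) [IsProbabilityMeasure P]
    (Φ : ℝ → ℝ)
    (ξ : ℕ → Ω → ℝ) (hmeas : ∀ n, Measurable (ξ n))
    (ξ₀ : Ω → ℝ) (h₀ : Measurable ξ₀)
    (hprob : TendstoInMeasure P ξ atTop (fun _ => (0 : ℝ)))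
    (hweak : ∀ η ∈ Orlicz P Φ,
      Tendsto (fun n => pairing P η (ξ n)) atTop (𝓝 (pairing P η ξ₀)))
    {ε : ℝ} (hε : 0 < ε) : P {ω | ε ≤ ξ₀ ω} = 0 := by
  by_contra hS
  -- find a bounded slice of positive measure
  have hcover : {ω | ε ≤ ξ₀ ω} ⊆ ⋃ M : ℕ, {ω | ε ≤ ξ₀ ω ∧ ξ₀ ω ≤ M} := by
    intro ω hω
    obtain ⟨M, hM⟩ := exists_nat_ge (ξ₀ ω)
    exact Set.mem_iUnion.2 ⟨M, hω, hM⟩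
  have hM : ∃ M : ℕ, P {ω | ε ≤ ξ₀ ω ∧ ξ₀ ω ≤ M} ≠ 0 := by
    by_contra h
    push_neg at h
    exact hS (measure_mono_null hcover (measure_iUnion_null h))
  obtain ⟨M, hMpos⟩ := hM
  set SM := {ω | ε ≤ ξ₀ ω ∧ ξ₀ ω ≤ (M : ℝ)} with hSMdef
  have hSMmeas : MeasurableSet SM :=
    (measurableSet_le measurable_const h₀).inter (measurableSet_le h₀ measurable_const)
  have hfin : P SM ≠ ⊤ := measure_ne_top P SM
  have hp : 0 < (P SM).toReal := ENNReal.toReal_pos hMpos hfin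
  -- a.e. convergent subsequence
  obtain ⟨ns, hns, hae⟩ := hprob.exists_seq_tendsto_ae
  -- Egorov
  obtain ⟨t, htmeas, htsmall, hunif⟩ :=
    tendstoUniformlyOn_of_ae_tendsto' (μ := P)
      (fun k => (hmeas (ns k)).stronglyMeasurable) stronglyMeasurable_const hae
      (half_pos hp)
  set A := SM \ t with hAdef
  have hAmeas : MeasurableSet A := hSMmeas.diff htmeas
  have hApos : 0 < P A := by
    by_contra h
    push_neg at h
    have hA0 : P A = 0 := le_antisymm h bot_le
    have h1 : P SM ≤ P A + P t := by
      refine (measure_mono ?_).trans (measure_union_le A t)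
      intro ω hω
      by_cases hω' : ω ∈ t
      · exact Or.inr hω'
      · exact Or.inl ⟨hω, hω'⟩
    rw [hA0, zero_add] at h1
    have h2 : P t < P SM := by
      refine lt_of_le_of_lt htsmall ?_
      have : ENNReal.ofReal ((P SM).toReal / 2) < ENNReal.ofReal ((P SM).toReal) :=
        ENNReal.ofReal_lt_ofReal_iff hp |>.2 (half_lt_self hp)
      rwa [ENNReal.ofReal_toReal hfin] at this
    exact absurd (le_antisymm h1 h2.le) h2.ne'
  -- test function
  set η : Ω → ℝ := A.indicator (fun _ => (1 : ℝ)) with hηdef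
  have hηmeas : Measurable η := measurable_const.indicator hAmeas
  have hηOrlicz : η ∈ Orlicz P Φ := by
    refine ⟨hηmeas, 1, one_pos, ?_⟩
    have hb : ∀ ω, ENNReal.ofReal (Φ (1 * η ω)) ≤ ENNReal.ofReal (max (Φ 0) (Φ 1)) := by
      intro ω
      by_cases hω : ω ∈ A
      · simp only [hηdef, Set.indicator_of_mem hω, one_mul]
        exact ENNReal.ofReal_le_ofReal (le_max_right _ _)
      · simp only [hηdef, Set.indicator_of_notMem hω, one_mul, mul_zero]
        exact ENNReal.ofReal_le_ofReal (le_max_left _ _)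
    calc ∫⁻ ω, ENNReal.ofReal (Φ (1 * η ω)) ∂P
        ≤ ∫⁻ _, ENNReal.ofReal (max (Φ 0) (Φ 1)) ∂P := lintegral_mono hb
      _ = ENNReal.ofReal (max (Φ 0) (Φ 1)) := by simp
      _ < ⊤ := ENNReal.ofReal_lt_top
  -- the pairing along the subsequence tends to 0
  have hto0 : Tendsto (fun k => pairing P η (ξ (ns k))) atTop (𝓝 0) := by
    rw [NormedAddCommGroup.tendsto_nhds_zero]
    intro r hr
    have hu := (Metric.tendstoUniformlyOn_iff.1 hunif) (r / 2) (half_pos hr)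
    filter_upwards [hu] with k hk
    have hbound : ∀ ω, ‖η ω * ξ (ns k) ω‖ ≤ r / 2 := by
      intro ω
      by_cases hω : ω ∈ A
      · have hωt : ω ∈ tᶜ := hω.2
        have := hk ω hωt
        simp only [Real.dist_eq, zero_sub, abs_neg] at this
        simp only [hηdef, Set.indicator_of_mem hω, one_mul]
        exact (le_of_lt (by simpa using this))
      · simp only [hηdef, Set.indicator_of_notMem hω, zero_mul, norm_zero]
        positivity
    have : ‖∫ ω, η ω * ξ (ns k) ω ∂P‖ ≤ r / 2 * (P Set.univ).toReal :=
      norm_integral_le_of_norm_le_const (Eventually.of_forall hbound)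
    simp only [measure_univ, ENNReal.toReal_one, mul_one] at this
    exact lt_of_le_of_lt (by exact this) (half_lt_self hr)
  -- so the limit pairing is 0
  have hweakA := (hweak η hηOrlicz).comp hns.tendsto_atTop
  have hL0 : pairing P η ξ₀ = 0 := tendsto_nhds_unique hweakA hto0
  -- but the limit pairing is ≥ ε * P A > 0
  have hint : IntegrableOn ξ₀ A P := by
    refine Integrable.mono' (integrable_const (M : ℝ)) h₀.aestronglyMeasurable ?_
    filter_upwards [ae_restrict_mem hAmeas] with ω hω
    have h1 : ε ≤ ξ₀ ω := hω.1.1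
    have h2 : ξ₀ ω ≤ M := hω.1.2
    rw [Real.norm_eq_abs, abs_of_pos (lt_of_lt_of_le hε h1)]
    exact h2
  have hpair_eq : pairing P η ξ₀ = ∫ ω in A, ξ₀ ω ∂P := by
    rw [pairing, ← integral_indicator hAmeas]
    congr 1
    funext ω
    by_cases hω : ω ∈ A
    · simp [hηdef, Set.indicator_of_mem hω]
    · simp [hηdef, Set.indicator_of_notMem hω]
  have hge : ε * (P A).toReal ≤ ∫ ω in A, ξ₀ ω ∂P :=
    setIntegral_ge_of_const_le_real hAmeas (measure_ne_top P A) (fun ω hω => hω.1.1) hint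
  have hApos' : 0 < (P A).toReal := ENNReal.toReal_pos hApos.ne' (measure_ne_top P A)
  have : (0 : ℝ) < ε * (P A).toReal := mul_pos hε hApos'
  rw [hpair_eq] at hL0
  linarith [hge, hL0]


/-- (No Δ₂ assumed.) If a sequence in `L_{Φ*}` is null in
probability and converges to `ξ` in `σ(L_{Φ*},L_Φ)`, then `ξ = 0`. -/
theorem statement3
    {Ω : Type*} [MeasurableSpace Ω] (P : Measure Ω) [IsProbabilityMeasure P]
    (Φ : ℝ → ℝ) (hΦ : IsYoung Φ)
    (ξ : ℕ → Ω → ℝ) (hmem : ∀ n, MemOrlicz P (conj Φ) (ξ n))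
    (ξ₀ : Ω → ℝ) (h₀ : MemOrlicz P (conj Φ) ξ₀)
    (hprob : TendstoInMeasure P ξ atTop (fun _ => (0 : ℝ)))
    (hweak : ∀ η ∈ Orlicz P Φ,
      Tendsto (fun n => pairing P η (ξ n)) atTop (𝓝 (pairing P η ξ₀))) :
    ξ₀ =ᵐ[P] 0 := by
  -- measurability
  have hmeas : ∀ n, Measurable (ξ n) := fun n => (hmem n).1
  have h₀meas : Measurable ξ₀ := h₀.1
  -- positive part
  have hpos : ∀ ε : ℝ, 0 < ε → P {ω | ε ≤ ξ₀ ω} = 0 := fun ε hε =>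
    aux_oneSided P Φ ξ hmeas ξ₀ h₀meas hprob hweak hε
  -- negative part via negation
  have hprob' : TendstoInMeasure P (fun n ω => -ξ n ω) atTop (fun _ => (0 : ℝ)) := by
    intro r hr
    have h := hprob r hr
    convert h using 2 with n
    congr 1
    ext ω
    simp [Real.dist_eq, abs_sub_comm]
  have hweak' : ∀ η ∈ Orlicz P Φ,
      Tendsto (fun n => pairing P η (fun ω => -ξ n ω)) atTop
        (𝓝 (pairing P η (fun ω => -ξ₀ ω))) := by
    intro η hη
    have hkey : ∀ f : Ω → ℝ, pairing P η (fun ω => -f ω) = -pairing P η f := by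
      intro f
      rw [pairing, pairing, ← integral_neg]
      congr 1
      funext ω
      ring
    simp only [hkey]
    exact (hweak η hη).neg
  have hneg : ∀ ε : ℝ, 0 < ε → P {ω | ε ≤ -ξ₀ ω} = 0 := fun ε hε =>
    aux_oneSided P Φ (fun n ω => -ξ n ω) (fun n => (hmeas n).neg)
      (fun ω => -ξ₀ ω) h₀meas.neg hprob' hweak' hε
  -- combine
  have hU : P (⋃ m : ℕ, ({ω | 1 / (m + 1 : ℝ) ≤ ξ₀ ω} ∪ {ω | 1 / (m + 1 : ℝ) ≤ -ξ₀ ω})) = 0 := by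
    refine measure_iUnion_null fun m => measure_union_null ?_ ?_
    · exact hpos _ (by positivity)
    · exact hneg _ (by positivity)
  have hsub : {ω | ξ₀ ω ≠ 0} ⊆
      ⋃ m : ℕ, ({ω | 1 / (m + 1 : ℝ) ≤ ξ₀ ω} ∪ {ω | 1 / (m + 1 : ℝ) ≤ -ξ₀ ω}) := by
    intro ω hω
    have habs : 0 < |ξ₀ ω| := abs_pos.2 hω
    obtain ⟨m, hm⟩ := exists_nat_gt (1 / |ξ₀ ω|)
    have hm' : 1 / (m + 1 : ℝ) ≤ |ξ₀ ω| := by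
      rw [div_le_iff₀ (by positivity)]
      rw [div_lt_iff₀ habs] at hm
      nlinarith
    refine Set.mem_iUnion.2 ⟨m, ?_⟩
    rcases le_abs.1 hm' with h | h
    · exact Or.inl h
    · exact Or.inr h
  have h0 : P {ω | ξ₀ ω ≠ 0} = 0 := measure_mono_null hsub hU
  filter_upwards [measure_eq_zero_iff_ae_notMem.1 h0] with ω hω
  simpa using hω


end OrliczPaper
end
end

section
/- Let Φ be a Young function satisfying the Δ2-condition, let Φ' be the left-derivative of Φ, p_Φ(x) = sup_{y>x} yΦ'(y)/Φ(y), p_Φ = inf_{x≥0} p_Φ(x) (which is finite by the Δ2-condition), and q_Φ = p_Φ/(p_Φ−1) ∈ (1,∞] (with 1/0 = ∞). Then for every 1 ≤ q < q_Φ, the Orlicz space L_{Φ*} has an upper q-estimate with respect to the Orlicz norm: there is a constant C > 0 such that for all n and all ξ_1,...,ξ_n ∈ L_{Φ*} that are disjointly supported (ξ_k = ξ_k·1_{A_k} with A_1,...,A_n ∈ F pairwise disjoint), ‖Σ_{k≤n} ξ_k‖_{(Φ*)} ≤ C (Σ_{k≤n} ‖ξ_k‖_{(Φ*)}^q)^{1/q}.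 -/
open MeasureTheory Filter Topology Set
open scoped ENNReal

noncomputable section

namespace OrliczPaper

section AuxLemmas

variable {Φ : ℝ → ℝ}

lemma IsYoung.nonneg (hΦ : IsYoung Φ) (x : ℝ) : 0 ≤ Φ x := by
  have h := hΦ.convexOn.2 (Set.mem_univ x) (Set.mem_univ (-x))
    (by norm_num : (0:ℝ) ≤ 1/2) (by norm_num : (0:ℝ) ≤ 1/2) (by norm_num)
  simp only [smul_eq_mul] at h
  have hx : (1/2 : ℝ) * x + (1/2 : ℝ) * (-x) = 0 := by ring
  rw [hx, hΦ.map_zero, hΦ.even] at h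
  linarith

lemma IsYoung.monoOn (hΦ : IsYoung Φ) {a b : ℝ} (ha : 0 ≤ a) (hab : a ≤ b) : Φ a ≤ Φ b := by
  rcases eq_or_lt_of_le (ha.trans hab) with hb | hb
  · have ha0 : a = 0 := le_antisymm (hab.trans hb.symm.le) ha
    rw [ha0, ← hb]
  · have ht1 : a / b ≤ 1 := (div_le_one hb).mpr hab
    have ht0 : 0 ≤ a / b := div_nonneg ha hb.le
    have h := hΦ.convexOn.2 (Set.mem_univ b) (Set.mem_univ 0)
      (show (0:ℝ) ≤ a / b from ht0) (show (0:ℝ) ≤ 1 - a / b by linarith)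
      (show a / b + (1 - a / b) = 1 by ring)
    simp only [smul_eq_mul, mul_zero, add_zero] at h
    rw [div_mul_cancel₀ _ hb.ne', hΦ.map_zero, mul_zero, add_zero] at h
    calc Φ a ≤ a / b * Φ b := h
      _ ≤ 1 * Φ b := mul_le_mul_of_nonneg_right ht1 (hΦ.nonneg b)
      _ = Φ b := one_mul _

lemma IsYoung.abs_eq (hΦ : IsYoung Φ) (x : ℝ) : Φ x = Φ |x| := by
  rcases abs_cases x with ⟨h, _⟩ | ⟨h, _⟩
  · rw [h]
  · rw [h, hΦ.even]

lemma IsYoung.measurable' (hΦ : IsYoung Φ) : Measurable Φ := by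
  have h1 : Monotone (fun y : ℝ => Φ (max y 0)) := fun a b hab =>
    hΦ.monoOn (le_max_right _ _) (max_le_max hab le_rfl)
  have h2 : Φ = (fun y : ℝ => Φ (max y 0)) ∘ fun x : ℝ => |x| := by
    funext x
    simp only [Function.comp_apply]
    rw [max_eq_left (abs_nonneg x), ← hΦ.abs_eq]
  rw [h2]
  exact h1.measurable.comp measurable_abs

lemma IsYoung.exists_ge (hΦ : IsYoung Φ) (c : ℝ) :
    ∃ M : ℝ, 1 ≤ M ∧ ∀ x, M ≤ x → c * x ≤ Φ x := by
  obtain ⟨M, hM⟩ := Filter.eventually_atTop.mp (hΦ.coercive.eventually_ge_atTop c)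
  refine ⟨max M 1, le_max_right _ _, fun x hx => ?_⟩
  have hx1 : (1:ℝ) ≤ x := le_trans (le_max_right _ _) hx
  have hx0 : 0 < x := by linarith
  have := hM x (le_trans (le_max_left _ _) hx)
  rw [le_div_iff₀ hx0] at this
  linarith

lemma IsYoung.conj_bddAbove (hΦ : IsYoung Φ) (y : ℝ) :
    BddAbove (Set.range fun x : ℝ => x * y - Φ x) := by
  obtain ⟨M, hM1, hM⟩ := hΦ.exists_ge (|y| + 1)
  refine ⟨M * |y|, ?_⟩
  rintro r ⟨x, rfl⟩
  show x * y - Φ x ≤ M * |y|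
  have hxy : x * y ≤ |x| * |y| := by
    calc x * y ≤ |x * y| := le_abs_self _
      _ = |x| * |y| := abs_mul _ _
  rcases le_or_gt |x| M with h | h
  · have h1 : |x| * |y| ≤ M * |y| := mul_le_mul_of_nonneg_right h (abs_nonneg y)
    have := hΦ.nonneg x
    linarith
  · have h1 : (|y| + 1) * |x| ≤ Φ x := by
      rw [hΦ.abs_eq]
      exact hM _ h.le
    nlinarith [abs_nonneg x, abs_nonneg y]

lemma IsYoung.young (hΦ : IsYoung Φ) (x y : ℝ) : x * y ≤ Φ x + conj Φ y := by
  have h : x * y - Φ x ≤ conj Φ y := by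
    rw [conj]
    exact le_ciSup (hΦ.conj_bddAbove y) x
  linarith [h]

lemma IsYoung.conj_nonneg (hΦ : IsYoung Φ) (y : ℝ) : 0 ≤ conj Φ y := by
  have := hΦ.young 0 y
  simpa [hΦ.map_zero] using this

lemma IsYoung.conj_mono (hΦ : IsYoung Φ) {y₁ y₂ : ℝ} (h0 : 0 ≤ y₁) (h : y₁ ≤ y₂) :
    conj Φ y₁ ≤ conj Φ y₂ := by
  rw [conj, conj]
  refine ciSup_le fun x => ?_
  rcases le_or_gt 0 x with hx | hx
  · refine le_trans ?_ (le_ciSup (hΦ.conj_bddAbove y₂) x)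
    show x * y₁ - Φ x ≤ x * y₂ - Φ x
    have : x * y₁ ≤ x * y₂ := mul_le_mul_of_nonneg_left h hx
    linarith
  · refine le_trans ?_ (le_ciSup (hΦ.conj_bddAbove y₂) (-x))
    show x * y₁ - Φ x ≤ -x * y₂ - Φ (-x)
    have h1 : x * y₁ ≤ 0 := mul_nonpos_of_nonpos_of_nonneg hx.le h0
    have h2 : 0 ≤ -x * y₂ := mul_nonneg (by linarith) (h0.trans h)
    rw [hΦ.even]
    linarith

lemma IsYoung.conj_neg (hΦ : IsYoung Φ) (y : ℝ) : conj Φ (-y) = conj Φ y := by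
  have key : ∀ z : ℝ, conj Φ (-z) ≤ conj Φ z := by
    intro z
    rw [conj, conj]
    refine ciSup_le fun x => ?_
    refine le_trans (le_of_eq ?_) (le_ciSup (hΦ.conj_bddAbove z) (-x))
    show x * -z - Φ x = -x * z - Φ (-x)
    rw [hΦ.even]
    ring
  refine le_antisymm (key y) ?_
  have := key (-y)
  rwa [neg_neg] at this

lemma IsYoung.conj_abs (hΦ : IsYoung Φ) (y : ℝ) : conj Φ y = conj Φ |y| := by
  rcases abs_cases y with ⟨h, _⟩ | ⟨h, _⟩
  · rw [h]
  · rw [h, hΦ.conj_neg]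

lemma IsYoung.conj_measurable (hΦ : IsYoung Φ) : Measurable (conj Φ) := by
  have h1 : Monotone (fun y : ℝ => conj Φ (max y 0)) := fun a b hab =>
    hΦ.conj_mono (le_max_right _ _) (max_le_max hab le_rfl)
  have h2 : conj Φ = (fun y : ℝ => conj Φ (max y 0)) ∘ fun x : ℝ => |x| := by
    funext x
    simp only [Function.comp_apply]
    rw [max_eq_left (abs_nonneg x), ← hΦ.conj_abs]
  rw [h2]
  exact h1.measurable.comp measurable_abs

variable {Ω : Type*} [MeasurableSpace Ω] (P : Measure Ω)

lemma zero_mem_orliczSet (hΦ : IsYoung Φ) (f : Ω → ℝ) :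
    (0:ℝ) ∈ {r : ℝ | ∃ g : Ω → ℝ, Measurable g ∧
      (∫⁻ ω, ENNReal.ofReal (Φ (g ω)) ∂P) ≤ 1 ∧ r = ∫ ω, g ω * f ω ∂P} := by
  refine ⟨fun _ => 0, measurable_const, ?_, by simp⟩
  simp [hΦ.map_zero]

lemma bddAbove_orliczSet (hΦ : IsYoung Φ) {f : Ω → ℝ} (hf : MemOrlicz P (conj Φ) f) :
    BddAbove {r : ℝ | ∃ g : Ω → ℝ, Measurable g ∧
      (∫⁻ ω, ENNReal.ofReal (Φ (g ω)) ∂P) ≤ 1 ∧ r = ∫ ω, g ω * f ω ∂P} := by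
  obtain ⟨hfm, l, hl, hint⟩ := hf
  set M : ℝ≥0∞ := ∫⁻ ω, ENNReal.ofReal (conj Φ (l * f ω)) ∂P with hM
  have hMne : M ≠ ⊤ := hint.ne
  refine ⟨(1 + M.toReal) / l, ?_⟩
  rintro r ⟨g, hgm, hg1, rfl⟩
  have hMt0 : 0 ≤ M.toReal := ENNReal.toReal_nonneg
  by_cases hI : Integrable (fun ω => g ω * f ω) P
  · rw [le_div_iff₀ hl]
    have h1 : (∫ ω, g ω * f ω ∂P) * l ≤ ∫ ω, |l * (g ω * f ω)| ∂P := by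
      rw [mul_comm, ← integral_const_mul]
      calc ∫ ω, l * (g ω * f ω) ∂P ≤ |∫ ω, l * (g ω * f ω) ∂P| := le_abs_self _
        _ = ‖∫ ω, l * (g ω * f ω) ∂P‖ := (Real.norm_eq_abs _).symm
        _ ≤ ∫ ω, ‖l * (g ω * f ω)‖ ∂P := norm_integral_le_integral_norm _
        _ = ∫ ω, |l * (g ω * f ω)| ∂P := by simp only [Real.norm_eq_abs]
    have hInt2 : Integrable (fun ω => |l * (g ω * f ω)|) P := (hI.const_mul l).abs
    have h2 : ENNReal.ofReal (∫ ω, |l * (g ω * f ω)| ∂P)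
        = ∫⁻ ω, ENNReal.ofReal |l * (g ω * f ω)| ∂P :=
      MeasureTheory.ofReal_integral_eq_lintegral_ofReal hInt2
        (Filter.Eventually.of_forall fun ω => abs_nonneg _)
    have h3 : (∫⁻ ω, ENNReal.ofReal |l * (g ω * f ω)| ∂P) ≤ 1 + M := by
      have hpt : ∀ ω, ENNReal.ofReal |l * (g ω * f ω)| ≤
          ENNReal.ofReal (Φ (g ω)) + ENNReal.ofReal (conj Φ (l * f ω)) := by
        intro ω
        have hy : |g ω| * |l * f ω| ≤ Φ (g ω) + conj Φ (l * f ω) := by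
          calc |g ω| * |l * f ω| ≤ Φ |g ω| + conj Φ |l * f ω| := hΦ.young _ _
            _ = Φ (g ω) + conj Φ (l * f ω) := by rw [← hΦ.abs_eq, ← hΦ.conj_abs]
        calc ENNReal.ofReal |l * (g ω * f ω)| = ENNReal.ofReal (|g ω| * |l * f ω|) := by
              rw [abs_mul, abs_mul, abs_mul]; ring_nf
          _ ≤ ENNReal.ofReal (Φ (g ω) + conj Φ (l * f ω)) := ENNReal.ofReal_le_ofReal hy
          _ ≤ _ := ENNReal.ofReal_add_le
      calc (∫⁻ ω, ENNReal.ofReal |l * (g ω * f ω)| ∂P)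
          ≤ ∫⁻ ω, (ENNReal.ofReal (Φ (g ω)) + ENNReal.ofReal (conj Φ (l * f ω))) ∂P :=
            lintegral_mono hpt
        _ = (∫⁻ ω, ENNReal.ofReal (Φ (g ω)) ∂P) + M := by
            have hm1 : Measurable fun ω => ENNReal.ofReal (Φ (g ω)) :=
              Measurable.ennreal_ofReal (hΦ.measurable'.comp hgm)
            rw [lintegral_add_left hm1]
        _ ≤ 1 + M := add_le_add_left hg1 _
    have hne : (1 + M) ≠ ⊤ := by
      simp [ENNReal.add_eq_top, hMne]
    have h4 : ∫ ω, |l * (g ω * f ω)| ∂P ≤ (1 + M).toReal := by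
      refine (ENNReal.ofReal_le_iff_le_toReal hne).mp ?_
      rw [h2]
      exact h3
    have h5 : (1 + M).toReal = 1 + M.toReal := by
      rw [ENNReal.toReal_add (by norm_num) hMne, ENNReal.toReal_one]
    linarith
  · rw [integral_undef hI]
    positivity

lemma orliczNorm_nonneg' (hΦ : IsYoung Φ) (f : Ω → ℝ) : 0 ≤ orliczNorm P Φ f := by
  rw [orliczNorm]
  by_cases h : BddAbove {r : ℝ | ∃ g : Ω → ℝ, Measurable g ∧
      (∫⁻ ω, ENNReal.ofReal (Φ (g ω)) ∂P) ≤ 1 ∧ r = ∫ ω, g ω * f ω ∂P}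
  · exact le_csSup h (zero_mem_orliczSet P hΦ f)
  · rw [Real.sSup_of_not_bddAbove h]

lemma le_orliczNorm (hΦ : IsYoung Φ) {f : Ω → ℝ} (hf : MemOrlicz P (conj Φ) f)
    {g : Ω → ℝ} (hgm : Measurable g)
    (hg1 : (∫⁻ ω, ENNReal.ofReal (Φ (g ω)) ∂P) ≤ 1) :
    ∫ ω, g ω * f ω ∂P ≤ orliczNorm P Φ f := by
  rw [orliczNorm]
  exact le_csSup (bddAbove_orliczSet P hΦ hf) ⟨g, hgm, hg1, rfl⟩

lemma leftDeriv_slope (hΦ : IsYoung Φ) {u v : ℝ} (huv : u < v) :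
    (Φ v - Φ u) / (v - u) ≤ leftDeriv Φ v := by
  have hbdd : BddAbove (Set.range fun h : {h : ℝ // 0 < h} => (Φ v - Φ (v - (h:ℝ))) / (h:ℝ)) := by
    refine ⟨(Φ (v + 1) - Φ v) / 1, ?_⟩
    rintro r ⟨⟨h, hh⟩, rfl⟩
    have := hΦ.convexOn.slope_mono_adjacent (Set.mem_univ (v - h)) (Set.mem_univ (v + 1))
      (by linarith : v - h < v) (by linarith : v < v + 1)
    simp only [sub_sub_cancel, add_sub_cancel_left] at this
    simpa using this
  have h := le_ciSup hbdd ⟨v - u, by linarith⟩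
  simp only [sub_sub_cancel] at h
  rw [leftDeriv]
  exact h

lemma step_numeric {p1 p s : ℝ} (hp1 : 1 < p1) (hp : p1 < p) (hs0 : 0 ≤ s)
    (hs : s ≤ min (1/2) ((p - p1) / (p1 * (p - 1)))) :
    (1 - s) ^ p ≤ 1 - p1 * s := by
  have hs2 : s ≤ 1/2 := hs.trans (min_le_left _ _)
  have hden : 0 < p1 * (p - 1) := by nlinarith
  have hskey : s * (p1 * (p - 1)) ≤ p - p1 := by
    have h := hs.trans (min_le_right _ _)
    calc s * (p1 * (p - 1)) ≤ ((p - p1) / (p1 * (p - 1))) * (p1 * (p - 1)) :=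
          mul_le_mul_of_nonneg_right h hden.le
      _ = p - p1 := div_mul_cancel₀ _ hden.ne'
  set t : ℝ := 1 - s with ht
  have ht2 : 1/2 ≤ t := by rw [ht]; linarith
  have ht0 : 0 < t := by linarith
  have htps : 0 < t + p * s := by nlinarith
  have htp : 0 < t ^ p := Real.rpow_pos_of_pos ht0 p
  have hb := one_add_mul_self_le_rpow_one_add
    (by linarith [div_nonneg hs0 ht0.le] : (-1:ℝ) ≤ s / t) (le_of_lt (hp1.trans hp))
  have h1 : (1:ℝ) + s / t = 1 / t := by
    field_simp
    try linarith
  have h2 : (1:ℝ) + p * (s / t) = (t + p * s) / t := by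
    field_simp
    try ring
  rw [h1, h2] at hb
  have hb2 : (t + p * s) / t ≤ (t ^ p)⁻¹ := by
    rwa [one_div, Real.inv_rpow ht0.le] at hb
  have h4 : t + p * s ≤ (t ^ p)⁻¹ * t := by rwa [div_le_iff₀ ht0] at hb2
  have h5 : t ^ p * (t + p * s) ≤ t ^ p * ((t ^ p)⁻¹ * t) :=
    mul_le_mul_of_nonneg_left h4 htp.le
  have h6 : t ^ p * ((t ^ p)⁻¹ * t) = t := by field_simp
  have hBt : t ^ p ≤ t / (t + p * s) := by
    rw [le_div_iff₀ htps]
    exact le_of_le_of_eq h5 h6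
  have hinner : 0 ≤ p - p1 - s * (p1 * (p - 1)) := by linarith
  have hlast : t / (t + p * s) ≤ 1 - p1 * s := by
    rw [div_le_iff₀ htps]
    nlinarith [mul_nonneg hs0 hinner]
  calc (1 - s) ^ p = t ^ p := by rw [ht]
    _ ≤ t / (t + p * s) := hBt
    _ ≤ 1 - p1 * s := hlast

lemma stepA (hΦ : IsYoung Φ) {X p1 p : ℝ} (hX : 0 ≤ X) (hp1 : 1 < p1) (hp : p1 < p)
    (hSlope : ∀ y, X < y → Φ y ≠ 0 → leftDeriv Φ y * y ≤ p1 * Φ y)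
    {u v : ℝ} (hu : X < u) (huv : u ≤ v)
    (hstep : v * (1 - min (1/2) ((p - p1) / (p1 * (p - 1)))) ≤ u) :
    Φ v ≤ (v / u) ^ p * Φ u := by
  have hu0 : 0 < u := lt_of_le_of_lt hX hu
  have hv0 : 0 < v := lt_of_lt_of_le hu0 huv
  rcases eq_or_lt_of_le huv with rfl | hlt
  · rw [div_self hu0.ne', Real.one_rpow, one_mul]
  rcases (hΦ.nonneg v).eq_or_lt with hv | hv
  · rw [← hv]
    have h1 : 0 ≤ (v / u) ^ p := Real.rpow_nonneg (by positivity) _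
    exact mul_nonneg h1 (hΦ.nonneg u)
  have hgt : X < v := hu.trans hlt
  have hld := hSlope v hgt hv.ne'
  have hslope := leftDeriv_slope hΦ hlt
  set s : ℝ := 1 - u / v with hsdef
  have huvle : u / v ≤ 1 := (div_le_one hv0).mpr huv
  have hs0 : 0 ≤ s := by rw [hsdef]; linarith
  have hss : s ≤ min (1/2) ((p - p1) / (p1 * (p - 1))) := by
    have h1 : 1 - min (1/2) ((p - p1) / (p1 * (p - 1))) ≤ u / v := by
      rw [le_div_iff₀ hv0]
      linarith [hstep]
    rw [hsdef]
    linarith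
  have hkey : Φ v - Φ u ≤ p1 * Φ v * s := by
    have h2 : leftDeriv Φ v ≤ p1 * Φ v / v := by
      rw [le_div_iff₀ hv0]
      calc leftDeriv Φ v * v = leftDeriv Φ v * v := rfl
        _ ≤ p1 * Φ v := hld
    have h3 : (Φ v - Φ u) / (v - u) ≤ p1 * Φ v / v := hslope.trans h2
    rw [div_le_iff₀ (by linarith : (0:ℝ) < v - u)] at h3
    calc Φ v - Φ u ≤ p1 * Φ v / v * (v - u) := h3
      _ = p1 * Φ v * s := by
          rw [hsdef]
          field_simp
          try ring
  have hnum : (1 - s) ^ p ≤ 1 - p1 * s := step_numeric hp1 hp hs0 hss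
  have huv' : u / v = 1 - s := by rw [hsdef]; ring
  have h5 : (u / v) ^ p * Φ v ≤ Φ u := by
    calc (u / v) ^ p * Φ v ≤ (1 - p1 * s) * Φ v := by
          rw [huv']
          exact mul_le_mul_of_nonneg_right hnum hv.le
      _ ≤ Φ u := by nlinarith [hkey]
  have hpow : 0 < (u / v) ^ p := Real.rpow_pos_of_pos (by positivity) _
  have hvu : (v / u) ^ p = ((u / v) ^ p)⁻¹ := by
    rw [show v / u = (u / v)⁻¹ by rw [inv_div], Real.inv_rpow (by positivity)]
  rw [hvu]
  have h6 := mul_le_mul_of_nonneg_left h5 (inv_nonneg.mpr hpow.le)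
  rwa [← mul_assoc, inv_mul_cancel₀ hpow.ne', one_mul] at h6

lemma chainA (hΦ : IsYoung Φ) {X p1 p : ℝ} (hX : 0 ≤ X) (hp1 : 1 < p1) (hp : p1 < p)
    (hSlope : ∀ y, X < y → Φ y ≠ 0 → leftDeriv Φ y * y ≤ p1 * Φ y) :
    ∀ u v : ℝ, X < u → u ≤ v → Φ v ≤ (v / u) ^ p * Φ u := by
  set m : ℝ := min (1/2) ((p - p1) / (p1 * (p - 1))) with hm
  have hm0 : 0 < m := by
    apply lt_min (by norm_num)
    apply div_pos (by linarith) (by nlinarith)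
  have hm2 : m ≤ 1/2 := min_le_left _ _
  set t0 : ℝ := 1 - m with ht0def
  have ht0pos : 0 < t0 := by rw [ht0def]; linarith
  have ht0lt : t0 < 1 := by rw [ht0def]; linarith
  have main : ∀ n : ℕ, ∀ u v : ℝ, X < u → u ≤ v → v * t0 ^ n ≤ u →
      Φ v ≤ (v / u) ^ p * Φ u := by
    intro n
    induction n with
    | zero =>
      intro u v hu huv hle
      have hu0 : 0 < u := lt_of_le_of_lt hX hu
      simp only [pow_zero, mul_one] at hle
      have huv' : u = v := le_antisymm huv hle
      subst huv'
      rw [div_self hu0.ne', Real.one_rpow, one_mul]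
    | succ n ih =>
      intro u v hu huv hle
      by_cases hc : v * t0 ≤ u
      · exact stepA hΦ hX hp1 hp hSlope hu huv hc
      · push_neg at hc
        have hu0 : 0 < u := lt_of_le_of_lt hX hu
        have hv0 : 0 < v := lt_of_lt_of_le hu0 huv
        set w : ℝ := v * t0 with hw
        have hw0 : 0 < w := by positivity
        have hXw : X < w := hu.trans hc
        have hwv : w ≤ v := by nlinarith
        have h1 : w * t0 ^ n ≤ u := by
          have he : v * t0 ^ (n + 1) = w * t0 ^ n := by rw [hw]; ring
          rw [← he]
          exact hle
        have h2 : Φ w ≤ (w / u) ^ p * Φ u := ih u w hu hc.le h1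
        have h3 : Φ v ≤ (v / w) ^ p * Φ w :=
          stepA hΦ hX hp1 hp hSlope hXw hwv (le_of_eq rfl)
        calc Φ v ≤ (v / w) ^ p * Φ w := h3
          _ ≤ (v / w) ^ p * ((w / u) ^ p * Φ u) :=
            mul_le_mul_of_nonneg_left h2 (Real.rpow_nonneg (by positivity) _)
          _ = (v / u) ^ p * Φ u := by
            rw [← mul_assoc, ← Real.mul_rpow (by positivity) (by positivity)]
            congr 2
            field_simp
  intro u v hu huv
  have hu0 : 0 < u := lt_of_le_of_lt hX hu
  obtain ⟨n, hn⟩ := pow_unbounded_of_one_lt (v / u) ((one_lt_inv₀ ht0pos).mpr ht0lt)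
  apply main n u v hu huv
  have hpow : 0 < t0 ^ n := pow_pos ht0pos n
  have h2 : v / u < (t0 ^ n)⁻¹ := by rwa [← inv_pow]
  have h3 : v < (t0 ^ n)⁻¹ * u := by rwa [div_lt_iff₀ hu0] at h2
  have h4 : v * t0 ^ n < u := by
    have := mul_lt_mul_of_pos_right h3 hpow
    rwa [inv_mul_eq_div, div_mul_eq_mul_div, mul_div_assoc, div_self hpow.ne', mul_one] at this
  exact h4.le

lemma lp_norm_mono {ι : Type*} (s : Finset ι) (f : ι → ℝ) (hf : ∀ i, 0 ≤ f i)
    {a b : ℝ} (ha : 0 < a) (hab : a ≤ b) :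
    (∑ i ∈ s, f i ^ b) ^ (1/b) ≤ (∑ i ∈ s, f i ^ a) ^ (1/a) := by
  have hb : 0 < b := lt_of_lt_of_le ha hab
  have hsum_nonneg : 0 ≤ ∑ i ∈ s, f i ^ a :=
    Finset.sum_nonneg fun i _ => Real.rpow_nonneg (hf i) a
  set S : ℝ := (∑ i ∈ s, f i ^ a) ^ (1/a) with hS
  have hS0 : 0 ≤ S := Real.rpow_nonneg hsum_nonneg _
  rcases hS0.eq_or_lt with hS0' | hSpos
  · have hsum0 : ∑ i ∈ s, f i ^ a = 0 := by
      by_contra hne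
      have hpos : 0 < ∑ i ∈ s, f i ^ a := lt_of_le_of_ne hsum_nonneg (Ne.symm hne)
      have := Real.rpow_pos_of_pos hpos (1/a)
      rw [← hS] at this
      linarith [hS0']
    have hzero : ∀ i ∈ s, f i = 0 := by
      intro i hi
      have h := (Finset.sum_eq_zero_iff_of_nonneg
        (fun i _ => Real.rpow_nonneg (hf i) a)).mp hsum0 i hi
      exact (Real.rpow_eq_zero (hf i) ha.ne').mp h
    have hzb : ∑ i ∈ s, f i ^ b = 0 := Finset.sum_eq_zero fun i hi => by
      rw [hzero i hi, Real.zero_rpow hb.ne']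
    rw [hzb, Real.zero_rpow (by positivity : (1:ℝ)/b ≠ 0)]
    exact hS0
  · have hSa : S ^ a = ∑ i ∈ s, f i ^ a := by
      rw [hS, one_div, Real.rpow_inv_rpow hsum_nonneg ha.ne']
    have hfS : ∀ i ∈ s, f i ≤ S := by
      intro i hi
      have h1 : f i ^ a ≤ ∑ j ∈ s, f j ^ a :=
        Finset.single_le_sum (fun j _ => Real.rpow_nonneg (hf j) a) hi
      have h2 : (f i ^ a) ^ (1/a) ≤ S :=
        Real.rpow_le_rpow (Real.rpow_nonneg (hf i) a) h1 (by positivity)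
      rwa [one_div, Real.rpow_rpow_inv (hf i) ha.ne'] at h2
    have hsb : ∑ i ∈ s, f i ^ b ≤ S ^ b := by
      have heq : S ^ b = (∑ i ∈ s, f i ^ a) * S ^ (b - a) := by
        calc S ^ b = S ^ (a + (b - a)) := by ring_nf
          _ = S ^ a * S ^ (b - a) := Real.rpow_add hSpos _ _
          _ = _ := by rw [hSa]
      rw [heq, Finset.sum_mul]
      apply Finset.sum_le_sum
      intro i hi
      rcases (hf i).eq_or_lt with h0 | h0
      · rw [← h0, Real.zero_rpow hb.ne']
        exact mul_nonneg (Real.rpow_nonneg le_rfl a) (Real.rpow_nonneg hS0 _)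
      · have hsplit2 : f i ^ b = f i ^ a * f i ^ (b - a) := by
          rw [← Real.rpow_add h0]
          congr 1
          ring
        rw [hsplit2]
        apply mul_le_mul_of_nonneg_left _ (Real.rpow_nonneg (hf i) a)
        exact Real.rpow_le_rpow (hf i) (hfS i hi) (by linarith)
    calc (∑ i ∈ s, f i ^ b) ^ (1/b) ≤ (S ^ b) ^ (1/b) :=
        Real.rpow_le_rpow (Finset.sum_nonneg fun i _ => Real.rpow_nonneg (hf i) b) hsb
          (by positivity)
      _ = S := by rw [one_div, Real.rpow_rpow_inv hS0 hb.ne']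

end AuxLemmas


set_option maxHeartbeats 2000000 in
/-- If `Φ ∈ Δ₂` and `1 ≤ q < q_Φ = p_Φ/(p_Φ − 1)`, then
`L_{Φ*}` has an upper `q`-estimate for the Orlicz norm: for disjointly
supported `ξ_1, …, ξ_n`,
`‖Σ ξ_k‖_{(Φ*)} ≤ C (Σ ‖ξ_k‖_{(Φ*)}^q)^{1/q}`. -/
theorem statement5
    {Ω : Type*} [MeasurableSpace Ω] (P : Measure Ω) [IsProbabilityMeasure P]
    (Φ : ℝ → ℝ) (hΦ : IsYoung Φ) (hΔ : Delta2 Φ)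
    (q : ℝ) (hq1 : 1 ≤ q) (hq : ENNReal.ofReal q < qPhi Φ) :
    ∃ C : ℝ, 0 < C ∧
      ∀ (n : ℕ) (ξ : Fin n → Ω → ℝ) (A : Fin n → Set Ω),
        (∀ k, MeasurableSet (A k)) → Pairwise (Function.onFun Disjoint A) →
        (∀ k, MemOrlicz P (conj Φ) (ξ k)) →
        (∀ k, ∀ᵐ ω ∂P, ω ∉ A k → ξ k ω = 0) →
        orliczNorm P Φ (fun ω => ∑ k, ξ k ω) ≤
          C * (∑ k, orliczNorm P Φ (ξ k) ^ q) ^ (1 / q) := by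
  classical
  have hq0 : (0:ℝ) < q := lt_of_lt_of_le one_pos hq1
  have hfin : pPhi Φ ≠ ⊤ := by
    intro htop
    rw [qPhi, htop, ENNReal.top_sub ENNReal.one_ne_top, ENNReal.div_top] at hq
    simp at hq
  -- choose exponents
  obtain ⟨X, hX0, p1, p, hp1, hp1p, hqp', hPhiAtle⟩ :
      ∃ X : ℝ, 0 ≤ X ∧ ∃ p1 p : ℝ, 1 < p1 ∧ p1 < p ∧ q ≤ p / (p - 1) ∧
        pPhiAt Φ X ≤ ENNReal.ofReal p1 := by
    rcases eq_or_lt_of_le hq1 with hq1' | hq1'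
    · -- q = 1
      have h1 : pPhi Φ < pPhi Φ + 1 := ENNReal.lt_add_right hfin one_ne_zero
      rw [pPhi] at h1
      obtain ⟨⟨X, hX⟩, hXlt⟩ := iInf_lt_iff.mp h1
      have hne : pPhiAt Φ X ≠ ⊤ := ne_top_of_lt hXlt
      set b : ℝ := (pPhiAt Φ X).toReal with hb
      refine ⟨X, hX, max b 1 + 1, max b 1 + 2, ?_, ?_, ?_, ?_⟩
      · have := le_max_right b 1; linarith
      · linarith
      · rw [← hq1']
        have h2 : (0:ℝ) < max b 1 + 2 - 1 := by
          have := le_max_right b 1; linarith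
        rw [le_div_iff₀ h2]
        linarith
      · have hble : b ≤ max b 1 + 1 := by
          have := le_max_left b 1; linarith
        calc pPhiAt Φ X = ENNReal.ofReal b := (ENNReal.ofReal_toReal hne).symm
          _ ≤ ENNReal.ofReal (max b 1 + 1) := ENNReal.ofReal_le_ofReal hble
    · -- 1 < q
      set Q : ℝ := q / (q - 1) with hQdef
      have hq10 : 0 < q - 1 := by linarith
      have hQ1 : 1 < Q := by
        rw [hQdef, lt_div_iff₀ hq10]
        linarith
      have hlt : pPhi Φ < ENNReal.ofReal Q := by
        by_contra hc
        push_neg at hc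
        set r : ℝ := (pPhi Φ).toReal with hr
        have hpr : pPhi Φ = ENNReal.ofReal r := (ENNReal.ofReal_toReal hfin).symm
        have hQr : Q ≤ r := by
          rw [hpr] at hc
          exact (ENNReal.ofReal_le_ofReal_iff ENNReal.toReal_nonneg).mp hc
        have hr1 : 1 < r := lt_of_lt_of_le hQ1 hQr
        have hsub : pPhi Φ - 1 = ENNReal.ofReal (r - 1) := by
          rw [hpr, ← ENNReal.ofReal_one, ← ENNReal.ofReal_sub _ zero_le_one]
        have hdiv : qPhi Φ = ENNReal.ofReal (r / (r - 1)) := by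
          rw [qPhi, hsub, hpr, ← ENNReal.ofReal_div_of_pos (by linarith)]
        rw [hdiv] at hq
        have hqlt : q < r / (r - 1) :=
          (ENNReal.ofReal_lt_ofReal_iff_of_nonneg (by linarith)).mp hq
        have hle : r / (r - 1) ≤ q := by
          rw [div_le_iff₀ (by linarith)]
          have h2 : Q * (q - 1) ≤ r * (q - 1) := mul_le_mul_of_nonneg_right hQr hq10.le
          rw [hQdef, div_mul_cancel₀ _ hq10.ne'] at h2
          nlinarith
        linarith
      rw [pPhi] at hlt
      obtain ⟨⟨X, hX⟩, hXlt⟩ := iInf_lt_iff.mp hlt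
      have hne : pPhiAt Φ X ≠ ⊤ := ne_top_of_lt hXlt
      set b : ℝ := (pPhiAt Φ X).toReal with hb
      have hbQ : b < Q := by
        have h1 : ENNReal.ofReal b < ENNReal.ofReal Q := by
          rw [hb, ENNReal.ofReal_toReal hne]
          exact hXlt
        exact (ENNReal.ofReal_lt_ofReal_iff_of_nonneg ENNReal.toReal_nonneg).mp h1
      set t : ℝ := max b 1 with htdef
      have htQ : t < Q := max_lt hbQ hQ1
      have hqt : 1 ≤ t := le_max_right _ _
      set p : ℝ := (t + Q) / 2 with hpdef
      have hp_t : t < p := by rw [hpdef]; linarith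
      have hpQ : p < Q := by rw [hpdef]; linarith
      have hp1' : 1 < p := lt_of_le_of_lt hqt hp_t
      set p1 : ℝ := max t ((1 + p) / 2) with hp1def
      have hp1gt : 1 < p1 :=
        lt_of_lt_of_le (by linarith : (1:ℝ) < (1 + p) / 2) (le_max_right _ _)
      have hp1lt : p1 < p := max_lt hp_t (by linarith)
      refine ⟨X, hX, p1, p, hp1gt, hp1lt, ?_, ?_⟩
      · rw [le_div_iff₀ (by linarith : (0:ℝ) < p - 1)]
        have hple : p ≤ q / (q - 1) := le_of_lt hpQ
        have h2 : p * (q - 1) ≤ q := by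
          have h3 := mul_le_mul_of_nonneg_right hple hq10.le
          rwa [div_mul_cancel₀ _ hq10.ne'] at h3
        nlinarith
      · have hbp1 : b ≤ p1 := le_trans (le_max_left b 1) (le_max_left _ _)
        calc pPhiAt Φ X = ENNReal.ofReal b := (ENNReal.ofReal_toReal hne).symm
          _ ≤ ENNReal.ofReal p1 := ENNReal.ofReal_le_ofReal hbp1
  have hp1pos : 0 < p1 := lt_trans one_pos hp1
  have hppos : 0 < p := by linarith
  have hp1' : 1 < p := lt_trans hp1 hp1p
  have hSlope : ∀ y, X < y → Φ y ≠ 0 → leftDeriv Φ y * y ≤ p1 * Φ y := by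
    intro y hy hΦy
    have h1 : ENNReal.ofReal (y * leftDeriv Φ y / Φ y) ≤ pPhiAt Φ X := by
      rw [pPhiAt]
      exact le_iSup (fun z : {z : ℝ // X < z} =>
        ENNReal.ofReal ((z:ℝ) * leftDeriv Φ (z:ℝ) / Φ (z:ℝ))) ⟨y, hy⟩
    have h2 : y * leftDeriv Φ y / Φ y ≤ p1 :=
      (ENNReal.ofReal_le_ofReal_iff hp1pos.le).mp (h1.trans hPhiAtle)
    have hΦpos : 0 < Φ y := lt_of_le_of_ne (hΦ.nonneg y) (Ne.symm hΦy)
    rw [div_le_iff₀ hΦpos] at h2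
    rw [mul_comm]
    exact h2
  -- the threshold x1
  obtain ⟨M, hM1, hM⟩ := hΦ.exists_ge 1
  set x1 : ℝ := max (X + 1) M with hx1def
  have hx1X : X < x1 := lt_of_lt_of_le (by linarith) (le_max_left _ _)
  have hx1pos : 0 < x1 := lt_of_le_of_lt hX0 hx1X
  have hΦx1 : 0 < Φ x1 := by
    have h1 := hM x1 (le_max_right _ _)
    nlinarith
  have hA' : ∀ u v : ℝ, X < u → u ≤ v → Φ v ≤ (v / u) ^ p * Φ u :=
    chainA hΦ hX0 hp1 hp1p hSlope
  -- constant
  set C : ℝ := (1 + Φ x1) ^ (1/p) with hCdef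
  have hCpos : 0 < C := Real.rpow_pos_of_pos (by linarith) _
  refine ⟨C, hCpos, ?_⟩
  intro n ξ A hAmeas hAdisj hmem hzero
  have hN0 : ∀ k, 0 ≤ orliczNorm P Φ (ξ k) := fun k => orliczNorm_nonneg' P hΦ (ξ k)
  have hsumN : (0:ℝ) ≤ ∑ k, orliczNorm P Φ (ξ k) ^ q :=
    Finset.sum_nonneg fun k _ => Real.rpow_nonneg (hN0 k) q
  have hR0 : 0 ≤ C * (∑ k, orliczNorm P Φ (ξ k) ^ q) ^ (1/q) :=
    mul_nonneg hCpos.le (Real.rpow_nonneg hsumN _)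
  rw [orliczNorm]
  apply Real.sSup_le _ hR0
  rintro r ⟨g, hgm, hg1, rfl⟩
  by_cases hI : Integrable (fun ω => g ω * ∑ k, ξ k ω) P
  swap
  · rw [integral_undef hI]
    exact hR0
  have hzall : ∀ᵐ ω ∂P, ∀ k, ω ∉ A k → ξ k ω = 0 := ae_all_iff.mpr hzero
  have hdom : ∀ k : Fin n, ∀ᵐ ω ∂P, ‖g ω * ξ k ω‖ ≤ ‖g ω * ∑ j, ξ j ω‖ := by
    intro k
    filter_upwards [hzall] with ω hω
    by_cases hωk : ω ∈ A k
    · have hsum : ∑ j, ξ j ω = ξ k ω := by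
        apply Finset.sum_eq_single_of_mem k (Finset.mem_univ k)
        intro j _ hj
        exact hω j fun hωj => Set.disjoint_left.mp (hAdisj hj) hωj hωk
      rw [hsum]
    · rw [hω k hωk, mul_zero]
      simp only [norm_zero]
      positivity
  have hIk : ∀ k, Integrable (fun ω => g ω * ξ k ω) P := fun k =>
    Integrable.mono' hI.norm ((hgm.mul (hmem k).1).aestronglyMeasurable) (hdom k)
  have hsplit : (∫ ω, g ω * ∑ k, ξ k ω ∂P) = ∑ k, ∫ ω, g ω * ξ k ω ∂P := by
    rw [← integral_finset_sum _ fun k _ => hIk k]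
    congr 1
    funext ω
    rw [Finset.mul_sum]
  set F : Ω → ℝ≥0∞ := fun ω => ENNReal.ofReal (Φ (g ω)) with hF
  have hFm : Measurable F := by
    have hm1 : Measurable fun ω => ENNReal.ofReal (Φ (g ω)) :=
      Measurable.ennreal_ofReal (hΦ.measurable'.comp hgm)
    exact hm1
  set a : Fin n → ℝ≥0∞ := fun k => ∫⁻ ω in A k, F ω ∂P with ha
  have hale : ∀ k, a k ≤ 1 := fun k => le_trans (setLIntegral_le_lintegral _ _) hg1
  have hane : ∀ k, a k ≠ ⊤ := fun k => ne_top_of_lt ((hale k).trans_lt ENNReal.one_lt_top)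
  set α : Fin n → ℝ := fun k => (a k).toReal with hα
  set β : Fin n → ℝ := fun k => (P (A k)).toReal with hβ
  set τ : Fin n → ℝ := fun k => (α k + Φ x1 * β k) ^ (1/p) with hτ
  have hbase0 : ∀ k, 0 ≤ α k + Φ x1 * β k := fun k =>
    add_nonneg ENNReal.toReal_nonneg (mul_nonneg hΦx1.le ENNReal.toReal_nonneg)
  have hτ0 : ∀ k, 0 ≤ τ k := fun k => Real.rpow_nonneg (hbase0 k) _
  have hkey : ∀ k, (∫ ω, g ω * ξ k ω ∂P) ≤ τ k * orliczNorm P Φ (ξ k) := by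
    intro k
    by_cases hτz : τ k = 0
    · have hbase : α k + Φ x1 * β k = 0 := by
        by_contra hbne
        have hpos : 0 < α k + Φ x1 * β k := lt_of_le_of_ne (hbase0 k) (Ne.symm hbne)
        exact (Real.rpow_pos_of_pos hpos (1/p)).ne' hτz
      have hβ0 : β k = 0 := by
        have h1 : (0:ℝ) ≤ α k := ENNReal.toReal_nonneg
        have h2 : (0:ℝ) ≤ β k := ENNReal.toReal_nonneg
        nlinarith
      have hPA : P (A k) = 0 := by
        rcases (ENNReal.toReal_eq_zero_iff _).mp hβ0 with h | h
        · exact h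
        · exact absurd h (measure_ne_top P _)
      have hξ0 : (fun ω => g ω * ξ k ω) =ᵐ[P] 0 := by
        have hA0 : ∀ᵐ ω ∂P, ω ∉ A k := measure_eq_zero_iff_ae_notMem.mp hPA
        filter_upwards [hzero k, hA0] with ω h1 h2
        rw [h1 h2, mul_zero]
        rfl
      rw [integral_eq_zero_of_ae hξ0, hτz, zero_mul]
    · have hτpos : 0 < τ k := lt_of_le_of_ne (hτ0 k) (Ne.symm hτz)
      set h : Ω → ℝ := fun ω => (A k).indicator g ω / τ k with hhdef
      have hhm : Measurable h := (hgm.indicator (hAmeas k)).div_const _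
      have hlint : (∫⁻ ω, ENNReal.ofReal (Φ (h ω)) ∂P) ≤ 1 := by
        rcases le_or_gt 1 (τ k) with hτ1 | hτ1
        · have hpt : ∀ ω, ENNReal.ofReal (Φ (h ω)) ≤ (A k).indicator F ω := by
            intro ω
            by_cases hωk : ω ∈ A k
            · simp only [hhdef, Set.indicator_of_mem hωk, hF]
              apply ENNReal.ofReal_le_ofReal
              calc Φ (g ω / τ k) = Φ |g ω / τ k| := hΦ.abs_eq _
                _ = Φ (|g ω| / τ k) := by rw [abs_div, abs_of_pos hτpos]
                _ ≤ Φ |g ω| := hΦ.monoOn (by positivity)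
                    (div_le_self (abs_nonneg _) hτ1)
                _ = Φ (g ω) := (hΦ.abs_eq _).symm
            · simp only [hhdef, Set.indicator_of_notMem hωk, hF]
              simp [hΦ.map_zero]
          calc (∫⁻ ω, ENNReal.ofReal (Φ (h ω)) ∂P)
              ≤ ∫⁻ ω, (A k).indicator F ω ∂P := lintegral_mono hpt
            _ = a k := by rw [lintegral_indicator (hAmeas k)]
            _ ≤ 1 := hale k
        · have hpow : ∀ y : ℝ, X < y → Φ (y / τ k) ≤ (1 / τ k) ^ p * Φ y := by
            intro y hy
            have hy0 : 0 < y := lt_of_le_of_lt hX0 hy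
            have h1 : y ≤ y / τ k := by
              rw [le_div_iff₀ hτpos]
              nlinarith
            have h2 := hA' y (y / τ k) hy h1
            have h3 : y / τ k / y = 1 / τ k := by
              field_simp
              try ring
            rwa [h3] at h2
          have hpt : ∀ ω, ENNReal.ofReal (Φ (h ω)) ≤
              (A k).indicator (fun ω =>
                ENNReal.ofReal ((1 / τ k) ^ p) * (F ω + ENNReal.ofReal (Φ x1))) ω := by
            intro ω
            by_cases hωk : ω ∈ A k
            · simp only [hhdef, Set.indicator_of_mem hωk, hF]
              have hreal : Φ (g ω / τ k) ≤ (1 / τ k) ^ p * (Φ (g ω) + Φ x1) := by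
                have habs : Φ (g ω / τ k) = Φ (|g ω| / τ k) := by
                  rw [hΦ.abs_eq, abs_div, abs_of_pos hτpos]
                rcases le_or_gt |g ω| x1 with hcase | hcase
                · calc Φ (g ω / τ k) = Φ (|g ω| / τ k) := habs
                    _ ≤ Φ (x1 / τ k) := hΦ.monoOn (by positivity)
                        ((div_le_div_iff_of_pos_right hτpos).mpr hcase)
                    _ ≤ (1 / τ k) ^ p * Φ x1 := hpow x1 hx1X
                    _ ≤ (1 / τ k) ^ p * (Φ (g ω) + Φ x1) := by
                        apply mul_le_mul_of_nonneg_left _ (Real.rpow_nonneg (by positivity) _)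
                        linarith [hΦ.nonneg (g ω)]
                · calc Φ (g ω / τ k) = Φ (|g ω| / τ k) := habs
                    _ ≤ (1 / τ k) ^ p * Φ |g ω| := hpow |g ω| (lt_trans hx1X hcase)
                    _ = (1 / τ k) ^ p * Φ (g ω) := by rw [← hΦ.abs_eq]
                    _ ≤ (1 / τ k) ^ p * (Φ (g ω) + Φ x1) := by
                        apply mul_le_mul_of_nonneg_left _ (Real.rpow_nonneg (by positivity) _)
                        linarith
              calc ENNReal.ofReal (Φ (g ω / τ k))
                  ≤ ENNReal.ofReal ((1 / τ k) ^ p * (Φ (g ω) + Φ x1)) :=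
                    ENNReal.ofReal_le_ofReal hreal
                _ = ENNReal.ofReal ((1 / τ k) ^ p) * ENNReal.ofReal (Φ (g ω) + Φ x1) :=
                    ENNReal.ofReal_mul (Real.rpow_nonneg (by positivity) _)
                _ = ENNReal.ofReal ((1 / τ k) ^ p) *
                    (ENNReal.ofReal (Φ (g ω)) + ENNReal.ofReal (Φ x1)) := by
                    rw [ENNReal.ofReal_add (hΦ.nonneg _) (hΦ.nonneg _)]
            · simp only [hhdef, Set.indicator_of_notMem hωk]
              simp [hΦ.map_zero]
          have hcm : Measurable fun ω => F ω + ENNReal.ofReal (Φ x1) :=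
            hFm.add measurable_const
          calc (∫⁻ ω, ENNReal.ofReal (Φ (h ω)) ∂P)
              ≤ ∫⁻ ω, (A k).indicator (fun ω =>
                  ENNReal.ofReal ((1 / τ k) ^ p) * (F ω + ENNReal.ofReal (Φ x1))) ω ∂P :=
                lintegral_mono hpt
            _ = ∫⁻ ω in A k,
                  ENNReal.ofReal ((1 / τ k) ^ p) * (F ω + ENNReal.ofReal (Φ x1)) ∂P :=
                lintegral_indicator (hAmeas k) _
            _ = ENNReal.ofReal ((1 / τ k) ^ p) * (a k + ENNReal.ofReal (Φ x1) * P (A k)) := by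
                rw [lintegral_const_mul _ hcm, lintegral_add_right _ measurable_const,
                  setLIntegral_const]
            _ = ENNReal.ofReal ((1 / τ k) ^ p * (α k + Φ x1 * β k)) := by
                rw [show a k = ENNReal.ofReal (α k) from (ENNReal.ofReal_toReal (hane k)).symm,
                  show P (A k) = ENNReal.ofReal (β k) from
                    (ENNReal.ofReal_toReal (measure_ne_top P _)).symm,
                  ← ENNReal.ofReal_mul hΦx1.le,
                  ← ENNReal.ofReal_add ENNReal.toReal_nonneg
                    (mul_nonneg hΦx1.le ENNReal.toReal_nonneg),
                  ← ENNReal.ofReal_mul (Real.rpow_nonneg (by positivity) _)]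
            _ = 1 := by
                have hbase : α k + Φ x1 * β k = τ k ^ p := by
                  rw [hτ]
                  simp only []
                  rw [one_div, Real.rpow_inv_rpow (hbase0 k) (by linarith : p ≠ 0)]
                rw [hbase, ← Real.mul_rpow (by positivity) (Real.rpow_nonneg (hbase0 k) _)]
                rw [one_div, inv_mul_cancel₀ hτz, Real.one_rpow, ENNReal.ofReal_one]
      have hfinal : (∫ ω, g ω * ξ k ω ∂P) = τ k * ∫ ω, h ω * ξ k ω ∂P := by
        rw [← integral_const_mul]
        apply integral_congr_ae
        filter_upwards [hzall] with ω hω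
        by_cases hωk : ω ∈ A k
        · simp only [hhdef, Set.indicator_of_mem hωk]
          field_simp
        · rw [hω k hωk, mul_zero, mul_zero, mul_zero]
      rw [hfinal]
      exact mul_le_mul_of_nonneg_left (le_orliczNorm P hΦ (hmem k) hhm hlint) (hτ0 k)
  -- sum the estimates
  have hdisjU : Set.PairwiseDisjoint (↑(Finset.univ : Finset (Fin n))) A :=
    fun i _ j _ hij => hAdisj hij
  have hsumα : ∑ k, α k ≤ 1 := by
    have h1 : ∑ k, a k = ∫⁻ ω in ⋃ k ∈ Finset.univ, A k, F ω ∂P :=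
      (lintegral_biUnion_finset hdisjU (fun k _ => hAmeas k) _).symm
    have h2 : ∑ k, a k ≤ 1 := by
      rw [h1]
      exact le_trans (setLIntegral_le_lintegral _ _) hg1
    calc ∑ k, α k = (∑ k, a k).toReal := (ENNReal.toReal_sum fun k _ => hane k).symm
      _ ≤ (1:ℝ≥0∞).toReal := ENNReal.toReal_mono ENNReal.one_ne_top h2
      _ = 1 := ENNReal.toReal_one
  have hsumβ : ∑ k, β k ≤ 1 := by
    have h1 : ∑ k, P (A k) = P (⋃ k ∈ Finset.univ, A k) :=
      (measure_biUnion_finset hdisjU fun k _ => hAmeas k).symm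
    have h2 : ∑ k, P (A k) ≤ 1 := by
      rw [h1]
      exact prob_le_one
    calc ∑ k, β k = (∑ k, P (A k)).toReal :=
        (ENNReal.toReal_sum fun k _ => measure_ne_top P _).symm
      _ ≤ (1:ℝ≥0∞).toReal := ENNReal.toReal_mono ENNReal.one_ne_top h2
      _ = 1 := ENNReal.toReal_one
  have hsumτ : ∑ k, τ k ^ p ≤ 1 + Φ x1 := by
    have he : ∀ k : Fin n, τ k ^ p = α k + Φ x1 * β k := fun k => by
      rw [hτ]
      simp only []
      rw [one_div, Real.rpow_inv_rpow (hbase0 k) (by linarith : p ≠ 0)]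
    rw [Finset.sum_congr rfl fun k _ => he k, Finset.sum_add_distrib, ← Finset.mul_sum]
    have h3 : Φ x1 * ∑ k, β k ≤ Φ x1 * 1 := mul_le_mul_of_nonneg_left hsumβ hΦx1.le
    linarith
  have hpconj : p.HolderConjugate (p / (p - 1)) :=
    (Real.holderConjugate_iff_eq_conjExponent hp1').mpr rfl
  have hHolder : ∑ k, τ k * orliczNorm P Φ (ξ k) ≤
      (∑ k, τ k ^ p) ^ (1/p) *
        (∑ k, orliczNorm P Φ (ξ k) ^ (p / (p - 1))) ^ (1/(p / (p - 1))) :=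
    Real.inner_le_Lp_mul_Lq_of_nonneg (s := Finset.univ) (f := τ)
      (g := fun k => orliczNorm P Φ (ξ k)) hpconj (fun k _ => hτ0 k) (fun k _ => hN0 k)
  have hlast : (∑ k, orliczNorm P Φ (ξ k) ^ (p / (p - 1))) ^ (1/(p / (p - 1))) ≤
      (∑ k, orliczNorm P Φ (ξ k) ^ q) ^ (1/q) :=
    lp_norm_mono _ _ hN0 hq0 hqp'
  have hfirst : (∑ k, τ k ^ p) ^ (1/p) ≤ C := by
    rw [hCdef]
    exact Real.rpow_le_rpow (Finset.sum_nonneg fun k _ => Real.rpow_nonneg (hτ0 k) p)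
      hsumτ (by positivity)
  calc (∫ ω, g ω * ∑ k, ξ k ω ∂P) = ∑ k, ∫ ω, g ω * ξ k ω ∂P := hsplit
    _ ≤ ∑ k, τ k * orliczNorm P Φ (ξ k) := Finset.sum_le_sum fun k _ => hkey k
    _ ≤ (∑ k, τ k ^ p) ^ (1/p) *
        (∑ k, orliczNorm P Φ (ξ k) ^ (p / (p - 1))) ^ (1/(p / (p - 1))) := hHolder
    _ ≤ C * (∑ k, orliczNorm P Φ (ξ k) ^ q) ^ (1/q) :=
      mul_le_mul hfirst hlast
        (Real.rpow_nonneg (Finset.sum_nonneg fun k _ => Real.rpow_nonneg (hN0 k) _) _)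
        hCpos.le

end OrliczPaper
end
end
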